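/- arXiv:1901.08273 — 2 statements merged into one kernel-verified Lean document; each statement's English description precedes it below -/
import Mathlib

section
/- Let A be a finitely generated ℤ-graded k-algebra, M a ℤ-graded A-module, and Ā, M̄ the ℤ/2-graded foldings. Then M is projective as a graded A-module if and only if M̄ is projective as a graded Ā-module. -/
set_option synthInstance.maxHeartbeats 1000000
set_option maxHeartbeats 1000000
set_option linter.unusedSectionVars false
set_option linter.unusedVariables false



universe u

section

variable {k : Type} [Field k] {A : Type} [Ring A] [Algebra k A]

/-- A graded module `P` (with grading `gradP`) over a graded algebra `A` (with grading
`𝒜`, indexed by an additive monoid `ι`) is *graded-projective* if every surjective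
degree-zero graded map `f : X → Y` of graded `A`-modules and every graded map
`g : P → Y` admit a graded lift `h : P → X` with `f ∘ h = g`. -/
def IsGradedProjective {ι : Type} [AddCommMonoid ι] [DecidableEq ι]
    (𝒜 : ι → Submodule k A)
    (P : Type u) [AddCommGroup P] [Module A P] (gradP : ι → AddSubgroup P) : Prop :=
  ∀ (X Y : Type u) (_ : AddCommGroup X) (_ : Module A X)
    (_ : AddCommGroup Y) (_ : Module A Y)
    (𝒳 : ι → AddSubgroup X) (𝒴 : ι → AddSubgroup Y),
    DirectSum.Decomposition 𝒳 → DirectSum.Decomposition 𝒴 →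
    (∀ (i j : ι) (a : A) (m : X), a ∈ 𝒜 i → m ∈ 𝒳 j → a • m ∈ 𝒳 (i + j)) →
    (∀ (i j : ι) (a : A) (m : Y), a ∈ 𝒜 i → m ∈ 𝒴 j → a • m ∈ 𝒴 (i + j)) →
    ∀ (f : X →ₗ[A] Y), Function.Surjective f → (∀ (i : ι), ∀ m ∈ 𝒳 i, f m ∈ 𝒴 i) →
    ∀ (g : P →ₗ[A] Y), (∀ (i : ι), ∀ m ∈ gradP i, g m ∈ 𝒴 i) →
    ∃ h : P →ₗ[A] X, (∀ (i : ι), ∀ m ∈ gradP i, h m ∈ 𝒳 i) ∧ f.comp h = g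

/-- The `ℤ/2`-grading obtained by folding a `ℤ`-grading (of an algebra). -/
def foldAlgGrading (𝒜 : ℤ → Submodule k A) : ZMod 2 → Submodule k A :=
  fun j => ⨆ (i : ℤ) (_ : (i : ZMod 2) = j), 𝒜 i

/-- The `ℤ/2`-grading obtained by folding a `ℤ`-grading (of a module). -/
def foldModGrading {M : Type u} [AddCommGroup M] (ℳ : ℤ → AddSubgroup M) :
    ZMod 2 → AddSubgroup M :=
  fun j => ⨆ (i : ℤ) (_ : (i : ZMod 2) = j), ℳ i

end

section Generic

variable {k : Type} [Field k] {A : Type} [Ring A] [Algebra k A]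
variable {ι : Type} [AddCommGroup ι] [DecidableEq ι]
variable {M : Type} [AddCommGroup M] [Module A M]

open DirectSum

/-- Homogeneous components commute with homogeneous scalar multiplication. -/
lemma decompose_smul_comm (𝒜 : ι → Submodule k A)
    {X : Type} [AddCommGroup X] [Module A X]
    (𝒳 : ι → AddSubgroup X) [DirectSum.Decomposition 𝒳]
    (hXs : ∀ (i j : ι) (a : A) (m : X), a ∈ 𝒜 i → m ∈ 𝒳 j → a • m ∈ 𝒳 (i + j))
    {a : A} {j : ι} (ha : a ∈ 𝒜 j) (i : ι) (x : X) :
    ((decompose 𝒳 (a • x) (j + i) : 𝒳 (j + i)) : X) = a • ((decompose 𝒳 x i : 𝒳 i) : X) := by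
  induction x using DirectSum.Decomposition.inductionOn 𝒳 with
  | zero => simp
  | @homogeneous n m =>
    by_cases hni : (n : ι) = i
    · subst hni
      rw [decompose_of_mem_same 𝒳 (hXs j n a m ha m.2),
        decompose_of_mem_same 𝒳 m.2]
    · rw [decompose_of_mem_ne 𝒳 (hXs j n a m ha m.2)
        (fun hc => hni (by exact add_left_cancel hc)),
        decompose_of_mem_ne 𝒳 m.2 hni, smul_zero]
  | add x y hx hy =>
    simp only [smul_add, decompose_add, DirectSum.add_apply, AddSubgroup.coe_add, hx, hy]

/-- Graded maps commute with homogeneous components. -/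
lemma decompose_map_comm
    {X Y : Type} [AddCommGroup X] [Module A X] [AddCommGroup Y] [Module A Y]
    (𝒳 : ι → AddSubgroup X) [DirectSum.Decomposition 𝒳]
    (𝒴 : ι → AddSubgroup Y) [DirectSum.Decomposition 𝒴]
    (f : X →ₗ[A] Y) (hf : ∀ (i : ι), ∀ m ∈ 𝒳 i, f m ∈ 𝒴 i)
    (i : ι) (x : X) :
    f ((decompose 𝒳 x i : 𝒳 i) : X) = ((decompose 𝒴 (f x) i : 𝒴 i) : Y) := by
  induction x using DirectSum.Decomposition.inductionOn 𝒳 with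
  | zero => simp
  | @homogeneous n m =>
    by_cases hni : (n : ι) = i
    · subst hni
      rw [decompose_of_mem_same 𝒳 m.2, decompose_of_mem_same 𝒴 (hf n m m.2)]
    · rw [decompose_of_mem_ne 𝒳 m.2 hni, decompose_of_mem_ne 𝒴 (hf n m m.2) hni, map_zero]
  | add x y hx hy =>
    simp only [map_add, decompose_add, DirectSum.add_apply, AddSubgroup.coe_add, hx, hy]

theorem isGradedProjective_of_projective
    (𝒜 : ι → Submodule k A) [DirectSum.Decomposition 𝒜]
    (ℳ : ι → AddSubgroup M) [DirectSum.Decomposition ℳ]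
    (hsmul : ∀ (i j : ι) (a : A) (m : M), a ∈ 𝒜 i → m ∈ ℳ j → a • m ∈ ℳ (i + j))
    (hproj : Module.Projective A M) :
    IsGradedProjective 𝒜 M ℳ := by
  intro X Y _ _ _ _ 𝒳 𝒴 decX decY hXs hYs f hfsurj hfgr g hggr
  obtain ⟨h₀, hh₀⟩ := Module.projective_lifting_property f g hfsurj
  -- the degree-zero part of h₀
  let φ : ∀ i : ι, ℳ i →+ X := fun i =>
    { toFun := fun m => ((decompose 𝒳 (h₀ (m : M)) i : 𝒳 i) : X)
      map_zero' := by simp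
      map_add' := by
        intro x y
        push_cast [map_add, decompose_add, DirectSum.add_apply]
        rfl }
  let hfun : M →+ X := (DirectSum.toAddMonoid φ).comp (decomposeAddEquiv ℳ).toAddMonoidHom
  have key : ∀ (i : ι) (m : M) (hm : m ∈ ℳ i),
      hfun m = ((decompose 𝒳 (h₀ m) i : 𝒳 i) : X) := by
    intro i m hm
    have h1 : hfun m = (DirectSum.toAddMonoid φ) (decomposeAddEquiv ℳ m) := rfl
    rw [h1, decomposeAddEquiv_apply, decompose_of_mem ℳ hm, DirectSum.toAddMonoid_of]
    rfl
  have hlin : ∀ (a : A) (m : M), hfun (a • m) = a • hfun m := by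
    intro a m
    induction m using DirectSum.Decomposition.inductionOn ℳ with
    | zero => simp
    | @homogeneous i m =>
      induction a using DirectSum.Decomposition.inductionOn 𝒜 with
      | zero => simp
      | @homogeneous j a =>
        rw [key i m m.2, key (j + i) _ (hsmul j i a m a.2 m.2), map_smul,
          decompose_smul_comm 𝒜 𝒳 hXs a.2]
      | add a b hab hbb => rw [add_smul, map_add, hab, hbb, add_smul]
    | add x y hx hy => rw [smul_add, map_add, hx, hy, map_add, smul_add]
  refine ⟨{ toFun := hfun, map_add' := map_add hfun, map_smul' := hlin }, ?_, ?_⟩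
  · intro i m hm
    rw [LinearMap.coe_mk]
    show hfun m ∈ 𝒳 i
    rw [key i m hm]
    exact (decompose 𝒳 (h₀ m) i).2
  · apply LinearMap.ext
    intro m
    show f (hfun m) = g m
    induction m using DirectSum.Decomposition.inductionOn ℳ with
    | zero => simp
    | @homogeneous i m =>
      rw [key i m m.2, decompose_map_comm 𝒳 𝒴 f hfgr, ← LinearMap.comp_apply, hh₀,
        decompose_of_mem_same 𝒴 (hggr i m m.2)]
    | add x y hx hy => rw [map_add, map_add, hx, hy, map_add]

end Generic


/-! ### An opaque wrapper around `Finsupp`, to avoid instance unification blowups. -/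

/-- The free `A`-module on `S`, as an opaque wrapper around `S →₀ A`. -/
def GF (A S : Type) [Ring A] : Type := S →₀ A

noncomputable instance GF.instAddCommGroup {A S : Type} [Ring A] : AddCommGroup (GF A S) :=
  inferInstanceAs (AddCommGroup (S →₀ A))
noncomputable instance GF.instModule {A S : Type} [Ring A] : Module A (GF A S) :=
  inferInstanceAs (Module A (S →₀ A))
noncomputable instance GF.instFree {A S : Type} [Ring A] : Module.Free A (GF A S) :=
  inferInstanceAs (Module.Free A (S →₀ A))

/-- The canonical linear equivalence between `GF A S` and `S →₀ A`. -/
noncomputable def GF.eqv (A S : Type) [Ring A] : GF A S ≃ₗ[A] (S →₀ A) :=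
  LinearEquiv.refl A (S →₀ A)

attribute [irreducible] GF

section Generic2

variable {k : Type} [Field k] {A : Type} [Ring A] [Algebra k A]
variable {ι : Type} [AddCommGroup ι] [DecidableEq ι]
variable {M : Type} [AddCommGroup M] [Module A M]

open DirectSum

variable (𝒜 : ι → Submodule k A) (ℳ : ι → AddSubgroup M)

local notation "S" => (Σ i : ι, ℳ i)
local notation "gfe" => GF.eqv A (Σ i : ι, ℳ i)
local notation "gfeInv" => LinearEquiv.symm (GF.eqv A (Σ i : ι, ℳ i))

/-- The grading on the graded free module `GF A (Σ i, ℳ i)`. -/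
def gfGrading (j : ι) : AddSubgroup (GF A (Σ i : ι, ℳ i)) where
  carrier := {x | ∀ p : S, gfe x p ∈ 𝒜 (j - p.1)}
  zero_mem' := fun p => by rw [map_zero, Finsupp.zero_apply]; exact zero_mem _
  add_mem' := fun hf hg p => by
    rw [map_add, Finsupp.add_apply]; exact add_mem (hf p) (hg p)
  neg_mem' := fun hf p => by
    rw [map_neg, Finsupp.neg_apply]; exact neg_mem (hf p)

lemma gf_single_mem (p : S) (n : ι) (a : A) (ha : a ∈ 𝒜 n) :
    (gfeInv (Finsupp.single p a)) ∈ gfGrading 𝒜 ℳ (n + p.1) := by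
  classical
  intro q
  rw [LinearEquiv.apply_symm_apply, Finsupp.single_apply]
  split
  · next h => subst h; simpa using ha
  · exact zero_mem _

/-- The degree-`n`, basis-vector-`p` inclusion into the graded free module. -/
noncomputable def gfSingle (p : S) (n : ι) : 𝒜 n →+ gfGrading 𝒜 ℳ (n + p.1) where
  toFun := fun a => ⟨gfeInv (Finsupp.single p (a : A)), gf_single_mem 𝒜 ℳ p n a a.2⟩
  map_zero' := Subtype.ext (by simp [Finsupp.single_zero])
  map_add' := fun a b => Subtype.ext (by simp [Finsupp.single_add])

variable [DirectSum.Decomposition 𝒜]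

/-- The degree decomposition hom out of a single `A`-summand. -/
noncomputable def gfPsi (p : S) : A →+ ⨁ j, gfGrading 𝒜 ℳ j :=
  (DirectSum.toAddMonoid fun n =>
    (DirectSum.of (fun j => (gfGrading 𝒜 ℳ j : AddSubgroup _)) (n + p.1)).comp
      (gfSingle 𝒜 ℳ p n)).comp
    (DirectSum.decomposeAddEquiv 𝒜).toAddMonoidHom

lemma gfPsi_apply (p : S) (n : ι) (a : A) (ha : a ∈ 𝒜 n) :
    gfPsi 𝒜 ℳ p a = DirectSum.of (fun j => (gfGrading 𝒜 ℳ j : AddSubgroup _)) (n + p.1)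
      ⟨gfeInv (Finsupp.single p a), gf_single_mem 𝒜 ℳ p n a ha⟩ := by
  have h1 : gfPsi 𝒜 ℳ p a = (DirectSum.toAddMonoid fun n =>
      (DirectSum.of (fun j => (gfGrading 𝒜 ℳ j : AddSubgroup _)) (n + p.1)).comp
        (gfSingle 𝒜 ℳ p n)) ((DirectSum.decomposeAddEquiv 𝒜) a) := rfl
  rw [h1, decomposeAddEquiv_apply, decompose_of_mem 𝒜 ha, DirectSum.toAddMonoid_of]
  rfl

lemma gfPsi_apply' (p : S) (n j : ι) (a : A) (ha : a ∈ 𝒜 n) (hj : n + p.1 = j)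
    (h2 : gfeInv (Finsupp.single p a) ∈ gfGrading 𝒜 ℳ j) :
    gfPsi 𝒜 ℳ p a = DirectSum.of (fun j => (gfGrading 𝒜 ℳ j : AddSubgroup _)) j
      ⟨gfeInv (Finsupp.single p a), h2⟩ := by
  subst hj; exact gfPsi_apply 𝒜 ℳ p n a ha

/-- The decomposition hom of the graded free module. -/
noncomputable def gfDec : GF A (Σ i : ι, ℳ i) →+ ⨁ j, gfGrading 𝒜 ℳ j :=
  (Finsupp.liftAddHom (gfPsi 𝒜 ℳ)).comp (GF.eqv A (Σ i : ι, ℳ i)).toLinearMap.toAddMonoidHom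

lemma gfDec_apply (x : GF A (Σ i : ι, ℳ i)) :
    gfDec 𝒜 ℳ x = Finsupp.liftAddHom (gfPsi 𝒜 ℳ) (gfe x) := rfl

lemma gfDec_single (p : S) (a : A) :
    gfDec 𝒜 ℳ (gfeInv (Finsupp.single p a)) = gfPsi 𝒜 ℳ p a := by
  rw [gfDec_apply, LinearEquiv.apply_symm_apply, Finsupp.liftAddHom_apply_single]

noncomputable instance gfDecomposition : DirectSum.Decomposition (gfGrading 𝒜 ℳ) := by
  classical
  refine DirectSum.Decomposition.ofAddHom (ℳ := gfGrading 𝒜 ℳ) (gfDec 𝒜 ℳ) ?_ ?_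
  · -- left inverse
    refine AddMonoidHom.ext fun x => ?_
    rw [AddMonoidHom.comp_apply, AddMonoidHom.id_apply]
    have hx : x = gfeInv (gfe x) := (LinearEquiv.symm_apply_apply _ _).symm
    rw [hx]
    generalize (gfe x) = f
    induction f using Finsupp.induction with
    | zero => simp
    | single_add p a f hps ha0 ih =>
      clear hps ha0
      simp only [map_add]
      refine congrArg₂ (· + ·) ?_ ih
      induction a using DirectSum.Decomposition.inductionOn 𝒜 with
      | zero => simp
      | @homogeneous n a =>
        rw [gfDec_single, gfPsi_apply 𝒜 ℳ p n a a.2, DirectSum.coeAddMonoidHom_of]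
      | add a b ha hb =>
        rw [Finsupp.single_add, map_add, map_add, map_add, ha, hb]
  · -- right inverse
    refine DirectSum.addHom_ext fun j x => ?_
    rw [AddMonoidHom.comp_apply, DirectSum.coeAddMonoidHom_of, AddMonoidHom.id_apply]
    obtain ⟨xv, hxv⟩ := x
    set f : S →₀ A := gfe xv with hf
    have hmem : ∀ p : S, f p ∈ 𝒜 (j - p.1) := hxv
    have h1 : gfDec 𝒜 ℳ xv = f.sum fun p a => gfPsi 𝒜 ℳ p a :=
      Finsupp.liftAddHom_apply _ _
    have hm : ∀ p : S, gfeInv (Finsupp.single p (f p)) ∈ gfGrading 𝒜 ℳ j := by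
      intro p
      have := gf_single_mem 𝒜 ℳ p (j - p.1) (f p) (hmem p)
      rwa [sub_add_cancel] at this
    have h2 : ∀ p ∈ f.support, gfPsi 𝒜 ℳ p (f p) =
        DirectSum.of (fun j => (gfGrading 𝒜 ℳ j : AddSubgroup _)) j
          ⟨gfeInv (Finsupp.single p (f p)), hm p⟩ := fun p _ =>
      gfPsi_apply' 𝒜 ℳ p (j - p.1) j (f p) (hmem p) (sub_add_cancel j p.1) (hm p)
    have h3 : gfDec 𝒜 ℳ xv = ∑ p ∈ f.support,
        DirectSum.of (fun j => (gfGrading 𝒜 ℳ j : AddSubgroup _)) j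
          ⟨gfeInv (Finsupp.single p (f p)), hm p⟩ := by
      rw [h1]; exact Finset.sum_congr rfl h2
    rw [h3, ← map_sum]
    congr 1
    refine Subtype.ext ?_
    rw [AddSubmonoidClass.coe_finset_sum, ← map_sum]
    have h4 : ∑ p ∈ f.support, Finsupp.single p (f p) = f := Finsupp.sum_single f
    rw [h4, hf, LinearEquiv.symm_apply_apply]

lemma gfGrading_smul (hmulA : ∀ (i j : ι) (a b : A), a ∈ 𝒜 i → b ∈ 𝒜 j → a * b ∈ 𝒜 (i + j))
    (i j : ι) (a : A) (x : GF A (Σ i : ι, ℳ i)) (ha : a ∈ 𝒜 i) (hx : x ∈ gfGrading 𝒜 ℳ j) :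
    a • x ∈ gfGrading 𝒜 ℳ (i + j) := by
  intro p
  rw [map_smul, Finsupp.smul_apply, smul_eq_mul]
  have := hmulA i (j - p.1) a (gfe x p) ha (hx p)
  rwa [← add_sub_assoc] at this

/-- The canonical surjection from the graded free module onto `M`. -/
noncomputable def gfToMod : GF A (Σ i : ι, ℳ i) →ₗ[A] M :=
  (Finsupp.linearCombination A (fun p : S => (p.2 : M))).comp (GF.eqv A (Σ i : ι, ℳ i)).toLinearMap

lemma gfToMod_surjective [DirectSum.Decomposition ℳ] : Function.Surjective (gfToMod (A := A) ℳ) := by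
  intro m
  induction m using DirectSum.Decomposition.inductionOn ℳ with
  | zero => exact ⟨0, map_zero _⟩
  | @homogeneous i m =>
    refine ⟨gfeInv (Finsupp.single ⟨i, m⟩ 1), ?_⟩
    rw [gfToMod, LinearMap.comp_apply, LinearEquiv.coe_toLinearMap,
      LinearEquiv.apply_symm_apply, Finsupp.linearCombination_single, one_smul]
  | add x y hx hy =>
    obtain ⟨u, hu⟩ := hx
    obtain ⟨v, hv⟩ := hy
    exact ⟨u + v, by rw [map_add, hu, hv]⟩

lemma gfToMod_graded
    (hsmul : ∀ (i j : ι) (a : A) (m : M), a ∈ 𝒜 i → m ∈ ℳ j → a • m ∈ ℳ (i + j))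
    (j : ι) (x : GF A (Σ i : ι, ℳ i)) (hx : x ∈ gfGrading 𝒜 ℳ j) :
    gfToMod ℳ x ∈ ℳ j := by
  have h1 : gfToMod ℳ x = (gfe x).sum fun p a => a • (p.2 : M) :=
    Finsupp.linearCombination_apply A (gfe x)
  rw [h1, Finsupp.sum]
  refine AddSubgroup.sum_mem _ fun p _ => ?_
  have := hsmul (j - p.1) p.1 (gfe x p) (p.2 : M) (hx p) p.2.2
  rwa [sub_add_cancel] at this

theorem projective_of_isGradedProjective
    (hmulA : ∀ (i j : ι) (a b : A), a ∈ 𝒜 i → b ∈ 𝒜 j → a * b ∈ 𝒜 (i + j))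
    [DirectSum.Decomposition ℳ]
    (hsmul : ∀ (i j : ι) (a : A) (m : M), a ∈ 𝒜 i → m ∈ ℳ j → a • m ∈ ℳ (i + j))
    (hgp : IsGradedProjective 𝒜 M ℳ) :
    Module.Projective A M := by
  obtain ⟨h, -, hcomp⟩ := hgp (GF A (Σ i : ι, ℳ i)) M inferInstance inferInstance
    inferInstance inferInstance (gfGrading 𝒜 ℳ) ℳ (gfDecomposition 𝒜 ℳ) inferInstance
    (fun i j a x ha hx => gfGrading_smul 𝒜 ℳ hmulA i j a x ha hx)
    hsmul (gfToMod ℳ) (gfToMod_surjective ℳ) (fun j x hx => gfToMod_graded 𝒜 ℳ hsmul j x hx)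
    LinearMap.id (fun i m hm => hm)
  exact Module.Projective.of_split h (gfToMod ℳ) hcomp

end Generic2


section Fold

variable {k : Type} [Field k] {A : Type} [Ring A] [Algebra k A]
variable {M : Type} [AddCommGroup M] [Module A M]

open DirectSum

lemma mem_foldAlgGrading (𝒜 : ℤ → Submodule k A) {i : ℤ} {a : A} (ha : a ∈ 𝒜 i) :
    a ∈ foldAlgGrading 𝒜 (i : ZMod 2) :=
  (le_iSup₂ (f := fun (n : ℤ) (_ : (n : ZMod 2) = (i : ZMod 2)) => 𝒜 n) i rfl) ha

lemma mem_foldModGrading (ℳ : ℤ → AddSubgroup M) {i : ℤ} {m : M} (hm : m ∈ ℳ i) :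
    m ∈ foldModGrading ℳ (i : ZMod 2) :=
  (le_iSup₂ (f := fun (n : ℤ) (_ : (n : ZMod 2) = (i : ZMod 2)) => ℳ n) i rfl) hm

lemma foldAlgGrading_induction (𝒜 : ℤ → Submodule k A) {j : ZMod 2}
    {C : ∀ a : A, a ∈ foldAlgGrading 𝒜 j → Prop}
    {a : A} (ha : a ∈ foldAlgGrading 𝒜 j)
    (hhom : ∀ (i : ℤ) (hi : (i : ZMod 2) = j) (x : A) (hx : x ∈ 𝒜 i),
      C x (hi ▸ mem_foldAlgGrading 𝒜 hx))
    (hzero : C 0 (zero_mem _))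
    (hadd : ∀ x y hx hy, C x hx → C y hy → C (x + y) (add_mem hx hy)) :
    C a ha := by
  have hrw : foldAlgGrading 𝒜 j = ⨆ (i : {i : ℤ // (i : ZMod 2) = j}), 𝒜 i.1 := by
    rw [foldAlgGrading, iSup_subtype']
  rw [hrw] at ha
  exact Submodule.iSup_induction' (p := fun i : {i : ℤ // (i : ZMod 2) = j} => 𝒜 i.1)
    (motive := fun x hx => C x (hrw ▸ hx))
    (fun i x hx => hhom i.1 i.2 x hx)
    hzero
    (fun x y hx hy cx cy => hadd x y (hrw ▸ hx) (hrw ▸ hy) cx cy)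
    ha

lemma foldModGrading_induction (ℳ : ℤ → AddSubgroup M) {j : ZMod 2}
    {C : ∀ m : M, m ∈ foldModGrading ℳ j → Prop}
    {m : M} (hm : m ∈ foldModGrading ℳ j)
    (hhom : ∀ (i : ℤ) (hi : (i : ZMod 2) = j) (x : M) (hx : x ∈ ℳ i),
      C x (hi ▸ mem_foldModGrading ℳ hx))
    (hzero : C 0 (zero_mem _))
    (hadd : ∀ x y hx hy, C x hx → C y hy → C (x + y) (add_mem hx hy)) :
    C m hm := by
  have hrw : foldModGrading ℳ j = ⨆ (i : {i : ℤ // (i : ZMod 2) = j}), ℳ i.1 := by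
    rw [foldModGrading, iSup_subtype']
  rw [hrw] at hm
  exact AddSubgroup.iSup_induction' (S := fun i : {i : ℤ // (i : ZMod 2) = j} => ℳ i.1)
    (C := fun x hx => C x (hrw ▸ hx))
    (fun i x hx => hhom i.1 i.2 x hx)
    hzero
    (fun x y hx hy cx cy => hadd x y (hrw ▸ hx) (hrw ▸ hy) cx cy)
    hm


/-- The folding decomposition hom for the algebra. -/
noncomputable def foldAlgDecHom (𝒜 : ℤ → Submodule k A) [DirectSum.Decomposition 𝒜] :
    A →+ ⨁ j : ZMod 2, foldAlgGrading 𝒜 j :=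
  (DirectSum.toAddMonoid fun i : ℤ =>
    (DirectSum.of (fun j : ZMod 2 => (foldAlgGrading 𝒜 j : Submodule k A)) (i : ZMod 2)).comp
      (Submodule.inclusion (le_iSup₂ (f := fun (n : ℤ) (_ : (n : ZMod 2) = (i : ZMod 2)) =>
        𝒜 n) i rfl)).toAddMonoidHom).comp
    (DirectSum.decomposeAddEquiv 𝒜).toAddMonoidHom

lemma foldAlgDecHom_of_mem (𝒜 : ℤ → Submodule k A) [DirectSum.Decomposition 𝒜]
    {i : ℤ} {a : A} (ha : a ∈ 𝒜 i) :
    foldAlgDecHom 𝒜 a = DirectSum.of (fun j : ZMod 2 => (foldAlgGrading 𝒜 j : Submodule k A))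
      (i : ZMod 2) ⟨a, mem_foldAlgGrading 𝒜 ha⟩ := by
  have h1 : foldAlgDecHom 𝒜 a = (DirectSum.toAddMonoid fun i : ℤ =>
    (DirectSum.of (fun j : ZMod 2 => (foldAlgGrading 𝒜 j : Submodule k A)) (i : ZMod 2)).comp
      (Submodule.inclusion (le_iSup₂ (f := fun (n : ℤ) (_ : (n : ZMod 2) = (i : ZMod 2)) =>
        𝒜 n) i rfl)).toAddMonoidHom) ((DirectSum.decomposeAddEquiv 𝒜) a) := rfl
  rw [h1, DirectSum.decomposeAddEquiv_apply, DirectSum.decompose_of_mem 𝒜 ha,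
    DirectSum.toAddMonoid_of]
  rfl

/-- Folding an algebra decomposition. -/
noncomputable def foldAlgDecomposition (𝒜 : ℤ → Submodule k A) [DirectSum.Decomposition 𝒜] :
    DirectSum.Decomposition (foldAlgGrading 𝒜) := by
  classical
  refine DirectSum.Decomposition.ofAddHom (ℳ := foldAlgGrading 𝒜) (foldAlgDecHom 𝒜) ?_ ?_
  · refine AddMonoidHom.ext fun a => ?_
    rw [AddMonoidHom.comp_apply, AddMonoidHom.id_apply]
    induction a using DirectSum.Decomposition.inductionOn 𝒜 with
    | zero => simp
    | @homogeneous i a =>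
      rw [foldAlgDecHom_of_mem 𝒜 a.2, DirectSum.coeAddMonoidHom_of]
    | add x y hx hy => rw [map_add, map_add, hx, hy]
  · refine DirectSum.addHom_ext fun j x => ?_
    rw [AddMonoidHom.comp_apply, DirectSum.coeAddMonoidHom_of, AddMonoidHom.id_apply]
    obtain ⟨a, haj⟩ := x
    refine foldAlgGrading_induction 𝒜
      (C := fun b hb => foldAlgDecHom 𝒜 b = DirectSum.of
        (fun j : ZMod 2 => (foldAlgGrading 𝒜 j : Submodule k A)) j ⟨b, hb⟩) haj ?_ ?_ ?_
    · intro i hi b hb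
      exact hi ▸ foldAlgDecHom_of_mem 𝒜 hb
    · exact (map_zero _).trans (map_zero _).symm
    · intro x y hx hy cx cy
      show foldAlgDecHom 𝒜 (x + y) = DirectSum.of
        (fun j : ZMod 2 => (foldAlgGrading 𝒜 j : Submodule k A)) j ⟨x + y, add_mem hx hy⟩
      rw [map_add, cx, cy, ← map_add]
      rfl

/-- The folding decomposition hom for the module. -/
noncomputable def foldModDecHom (ℳ : ℤ → AddSubgroup M) [DirectSum.Decomposition ℳ] :
    M →+ ⨁ j : ZMod 2, foldModGrading ℳ j :=
  (DirectSum.toAddMonoid fun i : ℤ =>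
    (DirectSum.of (fun j : ZMod 2 => (foldModGrading ℳ j : AddSubgroup M)) (i : ZMod 2)).comp
      (AddSubgroup.inclusion (le_iSup₂ (f := fun (n : ℤ) (_ : (n : ZMod 2) = (i : ZMod 2)) =>
        ℳ n) i rfl))).comp
    (DirectSum.decomposeAddEquiv ℳ).toAddMonoidHom

lemma foldModDecHom_of_mem (ℳ : ℤ → AddSubgroup M) [DirectSum.Decomposition ℳ]
    {i : ℤ} {m : M} (hm : m ∈ ℳ i) :
    foldModDecHom ℳ m = DirectSum.of (fun j : ZMod 2 => (foldModGrading ℳ j : AddSubgroup M))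
      (i : ZMod 2) ⟨m, mem_foldModGrading ℳ hm⟩ := by
  have h1 : foldModDecHom ℳ m = (DirectSum.toAddMonoid fun i : ℤ =>
    (DirectSum.of (fun j : ZMod 2 => (foldModGrading ℳ j : AddSubgroup M)) (i : ZMod 2)).comp
      (AddSubgroup.inclusion (le_iSup₂ (f := fun (n : ℤ) (_ : (n : ZMod 2) = (i : ZMod 2)) =>
        ℳ n) i rfl))) ((DirectSum.decomposeAddEquiv ℳ) m) := rfl
  rw [h1, DirectSum.decomposeAddEquiv_apply, DirectSum.decompose_of_mem ℳ hm,
    DirectSum.toAddMonoid_of]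
  rfl

/-- Folding a module decomposition. -/
noncomputable def foldModDecomposition (ℳ : ℤ → AddSubgroup M) [DirectSum.Decomposition ℳ] :
    DirectSum.Decomposition (foldModGrading ℳ) := by
  classical
  refine DirectSum.Decomposition.ofAddHom (ℳ := foldModGrading ℳ) (foldModDecHom ℳ) ?_ ?_
  · refine AddMonoidHom.ext fun m => ?_
    rw [AddMonoidHom.comp_apply, AddMonoidHom.id_apply]
    induction m using DirectSum.Decomposition.inductionOn ℳ with
    | zero => simp
    | @homogeneous i m =>
      rw [foldModDecHom_of_mem ℳ m.2, DirectSum.coeAddMonoidHom_of]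
    | add x y hx hy => rw [map_add, map_add, hx, hy]
  · refine DirectSum.addHom_ext fun j x => ?_
    rw [AddMonoidHom.comp_apply, DirectSum.coeAddMonoidHom_of, AddMonoidHom.id_apply]
    obtain ⟨m, hmj⟩ := x
    refine foldModGrading_induction ℳ
      (C := fun b hb => foldModDecHom ℳ b = DirectSum.of
        (fun j : ZMod 2 => (foldModGrading ℳ j : AddSubgroup M)) j ⟨b, hb⟩) hmj ?_ ?_ ?_
    · intro i hi b hb
      exact hi ▸ foldModDecHom_of_mem ℳ hb
    · exact (map_zero _).trans (map_zero _).symm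
    · intro x y hx hy cx cy
      show foldModDecHom ℳ (x + y) = DirectSum.of
        (fun j : ZMod 2 => (foldModGrading ℳ j : AddSubgroup M)) j ⟨x + y, add_mem hx hy⟩
      rw [map_add, cx, cy, ← map_add]
      rfl

/-- The folded smul compatibility. -/
lemma foldSmul (𝒜 : ℤ → Submodule k A) (ℳ : ℤ → AddSubgroup M)
    (hsmul : ∀ (i j : ℤ) (a : A) (m : M), a ∈ 𝒜 i → m ∈ ℳ j → a • m ∈ ℳ (i + j))
    (p q : ZMod 2) (a : A) (m : M) (ha : a ∈ foldAlgGrading 𝒜 p)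
    (hm : m ∈ foldModGrading ℳ q) : a • m ∈ foldModGrading ℳ (p + q) := by
  refine foldAlgGrading_induction 𝒜
    (C := fun a _ => ∀ m ∈ foldModGrading ℳ q, a • m ∈ foldModGrading ℳ (p + q)) ha ?_ ?_ ?_ m hm
  · intro i hi b hb m hm
    refine foldModGrading_induction ℳ
      (C := fun m _ => b • m ∈ foldModGrading ℳ (p + q)) hm ?_ ?_ ?_
    · intro n hn x hx
      have := mem_foldModGrading ℳ (hsmul i n b x hb hx)
      rwa [Int.cast_add, hi, hn] at this
    · show b • (0 : M) ∈ foldModGrading ℳ (p + q)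
      rw [smul_zero]; exact zero_mem _
    · intro x y _ _ cx cy
      show b • (x + y) ∈ foldModGrading ℳ (p + q)
      rw [smul_add]; exact add_mem cx cy
  · intro m hm
    rw [zero_smul]; exact zero_mem _
  · intro x y _ _ cx cy m hm
    rw [add_smul]; exact add_mem (cx m hm) (cy m hm)

/-- The folded multiplication compatibility. -/
lemma foldMul (𝒜 : ℤ → Submodule k A)
    (hmul : ∀ (i j : ℤ) (a b : A), a ∈ 𝒜 i → b ∈ 𝒜 j → a * b ∈ 𝒜 (i + j))
    (p q : ZMod 2) (a b : A) (ha : a ∈ foldAlgGrading 𝒜 p)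
    (hb : b ∈ foldAlgGrading 𝒜 q) : a * b ∈ foldAlgGrading 𝒜 (p + q) := by
  refine foldAlgGrading_induction 𝒜
    (C := fun a _ => ∀ b ∈ foldAlgGrading 𝒜 q, a * b ∈ foldAlgGrading 𝒜 (p + q)) ha ?_ ?_ ?_ b hb
  · intro i hi x hx b hb
    refine foldAlgGrading_induction 𝒜
      (C := fun b _ => x * b ∈ foldAlgGrading 𝒜 (p + q)) hb ?_ ?_ ?_
    · intro n hn y hy
      have := mem_foldAlgGrading 𝒜 (hmul i n x y hx hy)
      rwa [Int.cast_add, hi, hn] at this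
    · show x * (0 : A) ∈ foldAlgGrading 𝒜 (p + q)
      rw [mul_zero]; exact zero_mem _
    · intro x' y' _ _ cx cy
      show x * (x' + y') ∈ foldAlgGrading 𝒜 (p + q)
      rw [mul_add]; exact add_mem cx cy
  · intro b hb
    rw [zero_mul]; exact zero_mem _
  · intro x y _ _ cx cy b hb
    rw [add_mul]; exact add_mem (cx b hb) (cy b hb)

lemma foldOne (𝒜 : ℤ → Submodule k A) (h1 : (1 : A) ∈ 𝒜 0) :
    (1 : A) ∈ foldAlgGrading 𝒜 0 := by
  have := mem_foldAlgGrading 𝒜 h1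
  rwa [Int.cast_zero] at this

end Fold



/-- Corollary 10.6: let `A` be a finitely generated `ℤ`-graded algebra over a field
`k`, and `M` a `ℤ`-graded `A`-module.  Then `M` is projective as a graded `A`-module
if and only if the folded `ℤ/2`-graded module `M̄` is projective as a graded module
over the folded algebra `Ā`. -/
theorem graded_projective_iff_folded_projective
    (k : Type) [Field k] (A : Type) [Ring A] [Algebra k A]
    (hfg : Algebra.FiniteType k A)
    (𝒜 : ℤ → Submodule k A) [GradedRing 𝒜]
    (M : Type) [AddCommGroup M] [Module A M]
    (ℳ : ℤ → AddSubgroup M) [DirectSum.Decomposition ℳ]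
    (hsmul : ∀ (i j : ℤ) (a : A) (m : M), a ∈ 𝒜 i → m ∈ ℳ j → a • m ∈ ℳ (i + j)) :
    IsGradedProjective 𝒜 M ℳ ↔
      IsGradedProjective (foldAlgGrading 𝒜) M (foldModGrading ℳ) := by
  haveI : DirectSum.Decomposition (foldAlgGrading 𝒜) := foldAlgDecomposition 𝒜
  haveI : DirectSum.Decomposition (foldModGrading ℳ) := foldModDecomposition ℳ
  have hmulA : ∀ (i j : ℤ) (a b : A), a ∈ 𝒜 i → b ∈ 𝒜 j → a * b ∈ 𝒜 (i + j) :=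
    fun i j a b ha hb => SetLike.mul_mem_graded ha hb
  constructor
  · intro h
    have hproj : Module.Projective A M :=
      projective_of_isGradedProjective 𝒜 ℳ hmulA hsmul h
    exact isGradedProjective_of_projective (foldAlgGrading 𝒜) (foldModGrading ℳ)
      (foldSmul 𝒜 ℳ hsmul) hproj
  · intro h
    have hproj : Module.Projective A M :=
      projective_of_isGradedProjective (foldAlgGrading 𝒜) (foldModGrading ℳ)
        (foldMul 𝒜 hmulA) (foldSmul 𝒜 ℳ hsmul) h
    exact isGradedProjective_of_projective 𝒜 ℳ hsmul hproj
end

section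
/- Let k be a perfect field of characteristic p and let D be the ring generated over the Witt vectors W(k) by elements V and F subject to FV = VF = p, Vx^σ = xV, Fx = x^σ F for x ∈ W(k), where σ is the Witt-vector Frobenius. For m, n ≥ 1 and μ, μ′ ∈ k^×, the left D-modules M_{m,n,μ} = D/D(F^n − μV^m, p) and M_{m,n,μ′} = D/D(F^n − μ′V^m, p) are isomorphic if and only if μ/μ′ = a^{p^{m+n} − 1} for some a ∈ k^×. -/
set_option linter.unusedSectionVars false

noncomputable section

variable (p : ℕ) [Fact p.Prime] (k : Type) [Field k] [CharP k p] [PerfectRing k p]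

/-- Relations presenting the Dieudonné ring `D = W(k)⟨F, V⟩ / (FV − p, VF − p,
Fx − x^σ F, x V − V x^σ)`, as a quotient of the free ring on the set
`W(k) ⊔ {F, V}` (with `F` the generator `Sum.inr 0` and `V` the generator
`Sum.inr 1`, and `σ` the Witt-vector Frobenius). -/
inductive DieudonneRel :
    FreeAlgebra ℤ (WittVector p k ⊕ Fin 2) → FreeAlgebra ℤ (WittVector p k ⊕ Fin 2) → Prop
  | zero : DieudonneRel (FreeAlgebra.ι ℤ (Sum.inl 0)) 0
  | one : DieudonneRel (FreeAlgebra.ι ℤ (Sum.inl 1)) 1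
  | add (x y : WittVector p k) :
      DieudonneRel (FreeAlgebra.ι ℤ (Sum.inl x) + FreeAlgebra.ι ℤ (Sum.inl y))
        (FreeAlgebra.ι ℤ (Sum.inl (x + y)))
  | mul (x y : WittVector p k) :
      DieudonneRel (FreeAlgebra.ι ℤ (Sum.inl x) * FreeAlgebra.ι ℤ (Sum.inl y))
        (FreeAlgebra.ι ℤ (Sum.inl (x * y)))
  | FV : DieudonneRel (FreeAlgebra.ι ℤ (Sum.inr 0) * FreeAlgebra.ι ℤ (Sum.inr 1))
      (FreeAlgebra.ι ℤ (Sum.inl (p : WittVector p k)))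
  | VF : DieudonneRel (FreeAlgebra.ι ℤ (Sum.inr 1) * FreeAlgebra.ι ℤ (Sum.inr 0))
      (FreeAlgebra.ι ℤ (Sum.inl (p : WittVector p k)))
  | Fx (x : WittVector p k) :
      DieudonneRel (FreeAlgebra.ι ℤ (Sum.inr 0) * FreeAlgebra.ι ℤ (Sum.inl x))
        (FreeAlgebra.ι ℤ (Sum.inl (WittVector.frobenius x)) * FreeAlgebra.ι ℤ (Sum.inr 0))
  | xV (x : WittVector p k) :
      DieudonneRel (FreeAlgebra.ι ℤ (Sum.inl x) * FreeAlgebra.ι ℤ (Sum.inr 1))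
        (FreeAlgebra.ι ℤ (Sum.inr 1) * FreeAlgebra.ι ℤ (Sum.inl (WittVector.frobenius x)))

/-- The Dieudonné ring over the perfect field `k`. -/
abbrev DieudonneRing : Type := RingQuot (DieudonneRel p k)

/-- The element `F` of the Dieudonné ring. -/
def DF : DieudonneRing p k := RingQuot.mkRingHom _ (FreeAlgebra.ι ℤ (Sum.inr 0))

/-- The element `V` of the Dieudonné ring. -/
def DV : DieudonneRing p k := RingQuot.mkRingHom _ (FreeAlgebra.ι ℤ (Sum.inr 1))

/-- A Witt vector, viewed as an element of the Dieudonné ring. -/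
def DW (x : WittVector p k) : DieudonneRing p k :=
  RingQuot.mkRingHom _ (FreeAlgebra.ι ℤ (Sum.inl x))

/-- The left `D`-module `M_{m,n,μ} = D/D(Fⁿ − μVᵐ, p)`, `μ` being identified with
its Teichmüller representative in `W(k)`. -/
def Mmn (m n : ℕ) (μ : k) : Ideal (DieudonneRing p k) :=
  Ideal.span {DF p k ^ n - DW p k (WittVector.teichmuller p μ) * DV p k ^ m,
    ((p : ℕ) : DieudonneRing p k)}

-- ring-side lemmas
lemma DW_mul (x y : WittVector p k) : DW p k x * DW p k y = DW p k (x * y) := by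
  rw [DW, DW, DW, ← map_mul]
  exact RingQuot.mkRingHom_rel (DieudonneRel.mul x y)

lemma DF_DW (x : WittVector p k) :
    DF p k * DW p k x = DW p k (WittVector.frobenius x) * DF p k := by
  simp only [DF, DW, ← map_mul]
  exact RingQuot.mkRingHom_rel (DieudonneRel.Fx x)

lemma DW_DV (x : WittVector p k) :
    DW p k x * DV p k = DV p k * DW p k (WittVector.frobenius x) := by
  simp only [DV, DW, ← map_mul]
  exact RingQuot.mkRingHom_rel (DieudonneRel.xV x)

lemma DFpow_DW (j : ℕ) (x : WittVector p k) :
    DF p k ^ j * DW p k x = DW p k ((WittVector.frobenius)^[j] x) * DF p k ^ j := by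
  induction j generalizing x with
  | zero => simp
  | succ i ih =>
    rw [pow_succ, mul_assoc, DF_DW, ← mul_assoc, ih, Function.iterate_succ_apply,
      mul_assoc]

lemma DW_DVpow (j : ℕ) (x : WittVector p k) :
    DW p k x * DV p k ^ j = DV p k ^ j * DW p k ((WittVector.frobenius)^[j] x) := by
  induction j generalizing x with
  | zero => simp
  | succ i ih =>
    rw [pow_succ', ← mul_assoc, DW_DV, mul_assoc, ih, ← mul_assoc, ← pow_succ',
      Function.iterate_succ_apply]

lemma frob_teich (c : k) :
    WittVector.frobenius (WittVector.teichmuller p c) = WittVector.teichmuller p (c ^ p) := by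
  rw [WittVector.frobenius_eq_map_frobenius, WittVector.map_teichmuller]
  rfl

lemma frob_iter_teich (j : ℕ) (c : k) :
    (WittVector.frobenius)^[j] (WittVector.teichmuller p c)
      = WittVector.teichmuller p (c ^ p ^ j) := by
  induction j generalizing c with
  | zero => simp
  | succ i ih =>
    rw [Function.iterate_succ_apply, frob_teich, ih, ← pow_mul, pow_succ']

-- continuation
section Part2
variable (p : ℕ) [Fact p.Prime] (k : Type) [Field k] [CharP k p] [PerfectRing k p]

lemma DW_one : DW p k 1 = 1 := by
  rw [DW, RingQuot.mkRingHom_rel (DieudonneRel.one), map_one]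

lemma gen1_mem (m n : ℕ) (μ : k) :
    DF p k ^ n - DW p k (WittVector.teichmuller p μ) * DV p k ^ m ∈ Mmn p k m n μ :=
  Submodule.subset_span (Set.mem_insert _ _)

lemma genp_mem (m n : ℕ) (μ : k) : ((p : ℕ) : DieudonneRing p k) ∈ Mmn p k m n μ :=
  Submodule.subset_span (Set.mem_insert_of_mem _ rfl)

lemma mul_teich_mem (m n : ℕ) (μ μ' : k) (a : k)
    (hμeq : μ = μ' * a ^ (p ^ (m + n) - 1)) {d : DieudonneRing p k}
    (hd : d ∈ Mmn p k m n μ) :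
    d * DW p k (WittVector.teichmuller p (a ^ p ^ m)) ∈ Mmn p k m n μ' := by
  set c : k := a ^ p ^ m with hc_def
  set w : DieudonneRing p k := DW p k (WittVector.teichmuller p c) with hw
  have hc : μ * a = c ^ p ^ n * μ' := by
    have h1 : (1:ℕ) ≤ p ^ (m + n) := Nat.one_le_pow _ _ (Fact.out : p.Prime).pos
    have : c ^ p ^ n = a ^ p ^ (m + n) := by
      rw [hc_def, ← pow_mul, ← pow_add]
    rw [this, hμeq, mul_assoc, ← pow_succ, Nat.sub_add_cancel h1, mul_comm]
  have hc1 : DF p k ^ n * w = DW p k (WittVector.teichmuller p (c ^ p ^ n)) * DF p k ^ n := by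
    rw [hw, DFpow_DW, frob_iter_teich]
  have hc2 : DW p k (WittVector.teichmuller p a) * DV p k ^ m = DV p k ^ m * w := by
    rw [hw, DW_DVpow, frob_iter_teich]
  induction hd using Submodule.span_induction with
  | mem x hx =>
    rcases hx with hx | hx
    · subst hx
      have expand : (DF p k ^ n - DW p k (WittVector.teichmuller p μ) * DV p k ^ m) * w
          = DW p k (WittVector.teichmuller p (c ^ p ^ n))
              * (DF p k ^ n - DW p k (WittVector.teichmuller p μ') * DV p k ^ m) := by
        rw [sub_mul, hc1, mul_assoc, ← hc2, ← mul_assoc, DW_mul, mul_sub]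
        congr 1
        rw [← mul_assoc, DW_mul, ← map_mul, ← map_mul]
        congr 2
        rw [hc]
      rw [expand, ← smul_eq_mul]
      exact Submodule.smul_mem _ _ (gen1_mem p k m n μ')
    · simp only [Set.mem_singleton_iff] at hx
      subst hx
      rw [(Nat.cast_commute (p : ℕ) w).eq, ← smul_eq_mul]
      exact Submodule.smul_mem _ _ (genp_mem p k m n μ')
  | zero => simpa using (Mmn p k m n μ').zero_mem
  | add x y _ _ ihx ihy => rw [add_mul]; exact (Mmn p k m n μ').add_mem ihx ihy
  | smul r x _ ihx =>
    rw [smul_eq_mul, mul_assoc]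
    exact Submodule.smul_mem _ r ihx

/-- Right multiplication by the Teichmüller lift of `a ^ p ^ m`, descended to quotients. -/
def rmulQ (m n : ℕ) (μ μ' : k) (a : k)
    (hμeq : μ = μ' * a ^ (p ^ (m + n) - 1)) :
    (DieudonneRing p k ⧸ Mmn p k m n μ) →ₗ[DieudonneRing p k]
      (DieudonneRing p k ⧸ Mmn p k m n μ') :=
  Submodule.liftQ _ ((Mmn p k m n μ').mkQ.comp
    (LinearMap.toSpanSingleton (DieudonneRing p k) (DieudonneRing p k)
      (DW p k (WittVector.teichmuller p (a ^ p ^ m)))))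
    (by
      intro d hd
      simp only [LinearMap.mem_ker, LinearMap.comp_apply, LinearMap.toSpanSingleton_apply,
        Submodule.mkQ_apply, Submodule.Quotient.mk_eq_zero, smul_eq_mul]
      exact mul_teich_mem p k m n μ μ' a hμeq hd)

lemma rmulQ_apply (m n : ℕ) (μ μ' : k) (a : k)
    (hμeq : μ = μ' * a ^ (p ^ (m + n) - 1)) (d : DieudonneRing p k) :
    rmulQ p k m n μ μ' a hμeq (Submodule.Quotient.mk d)
      = Submodule.Quotient.mk (d * DW p k (WittVector.teichmuller p (a ^ p ^ m))) := by
  simp [rmulQ, Submodule.liftQ_apply, LinearMap.toSpanSingleton_apply, smul_eq_mul]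

lemma iso_of_rel (m n : ℕ) (μ μ' : k) (a : k) (ha : a ≠ 0)
    (hμeq : μ = μ' * a ^ (p ^ (m + n) - 1)) :
    Nonempty ((DieudonneRing p k ⧸ Mmn p k m n μ) ≃ₗ[DieudonneRing p k]
        (DieudonneRing p k ⧸ Mmn p k m n μ')) := by
  have hμ'eq : μ' = μ * (a⁻¹) ^ (p ^ (m + n) - 1) := by
    rw [hμeq, mul_assoc, ← mul_pow, mul_inv_cancel₀ ha, one_pow, mul_one]
  have key : ∀ b b' : k, b * b' = 1 → ∀ d : DieudonneRing p k,
      d * DW p k (WittVector.teichmuller p (b ^ p ^ m))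
        * DW p k (WittVector.teichmuller p (b' ^ p ^ m)) = d := by
    intro b b' hbb' d
    rw [mul_assoc, DW_mul, ← map_mul, ← mul_pow, hbb', one_pow, map_one, DW_one, mul_one]
  refine ⟨LinearEquiv.ofLinear (rmulQ p k m n μ μ' a hμeq)
    (rmulQ p k m n μ' μ a⁻¹ hμ'eq) ?_ ?_⟩
  · apply Submodule.linearMap_qext
    apply LinearMap.ext
    intro d
    simp only [LinearMap.comp_apply, Submodule.mkQ_apply, LinearMap.id_apply,
      rmulQ_apply]
    rw [key a⁻¹ a (inv_mul_cancel₀ ha)]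
  · apply Submodule.linearMap_qext
    apply LinearMap.ext
    intro d
    simp only [LinearMap.comp_apply, Submodule.mkQ_apply, LinearMap.id_apply,
      rmulQ_apply]
    rw [key a a⁻¹ (mul_inv_cancel₀ ha)]

end Part2
section Part3
variable (p : ℕ) [Fact p.Prime] (k : Type) [Field k] [CharP k p] [PerfectRing k p]
variable (m n : ℕ) (ν : k)

/-- The operator `F` on `k^{m+n}`. -/
def Fop : (Fin (m + n) → k) →+ (Fin (m + n) → k) where
  toFun z j :=
    if (j : ℕ) = 0 then ν * frobenius k p (z ⟨m + n - 1, by have := j.isLt; omega⟩)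
    else if h : m + 1 ≤ (j : ℕ) then frobenius k p (z ⟨(j : ℕ) - 1, by have := j.isLt; omega⟩)
    else 0
  map_zero' := by
    funext j
    split_ifs <;> simp
  map_add' z w := by
    funext j
    simp only [Pi.add_apply]
    split_ifs <;> simp [mul_add]

/-- The operator `V` on `k^{m+n}`. -/
def Vop : (Fin (m + n) → k) →+ (Fin (m + n) → k) where
  toFun z j :=
    if h : (j : ℕ) + 1 ≤ m ∧ (j : ℕ) + 1 < m + n then
      (frobeniusEquiv k p).symm (z ⟨(j : ℕ) + 1, h.2⟩)
    else 0
  map_zero' := by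
    funext j
    split_ifs <;> simp
  map_add' z w := by
    funext j
    simp only [Pi.add_apply]
    split_ifs <;> simp

/-- The operator given by a Witt vector (scalar multiplication by its first coefficient). -/
def Wop (w : WittVector p k) : (Fin (m + n) → k) →+ (Fin (m + n) → k) where
  toFun z := w.coeff 0 • z
  map_zero' := by simp
  map_add' z z' := by simp [smul_add]

lemma Fop_apply (z : Fin (m + n) → k) (j : Fin (m + n)) :
    Fop p k m n ν z j =
      if (j : ℕ) = 0 then ν * frobenius k p (z ⟨m + n - 1, by have := j.isLt; omega⟩)
      else if h : m + 1 ≤ (j : ℕ) then frobenius k p (z ⟨(j : ℕ) - 1, by have := j.isLt; omega⟩)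
      else 0 := rfl

lemma Vop_apply (z : Fin (m + n) → k) (j : Fin (m + n)) :
    Vop p k m n z j =
      if h : (j : ℕ) + 1 ≤ m ∧ (j : ℕ) + 1 < m + n then
        (frobeniusEquiv k p).symm (z ⟨(j : ℕ) + 1, h.2⟩)
      else 0 := rfl

lemma Wop_apply (w : WittVector p k) (z : Fin (m + n) → k) (j : Fin (m + n)) :
    Wop p k m n w z j = w.coeff 0 * z j := rfl

/-- The assignment of generators for the representation. -/
def genMap : WittVector p k ⊕ Fin 2 → Module.End ℤ (Fin (m + n) → k) :=
  Sum.elim (fun w => (Wop p k m n w).toIntLinearMap)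
    ![(Fop p k m n ν).toIntLinearMap, (Vop p k m n).toIntLinearMap]

lemma genMap_rel : ∀ ⦃x y : FreeAlgebra ℤ (WittVector p k ⊕ Fin 2)⦄, DieudonneRel p k x y →
    FreeAlgebra.lift ℤ (genMap p k m n ν) x = FreeAlgebra.lift ℤ (genMap p k m n ν) y := by
  intro x y h
  induction h with
  | zero =>
    simp only [FreeAlgebra.lift_ι_apply, map_zero, genMap, Sum.elim_inl]
    apply LinearMap.ext; intro z
    simp [Wop_apply]
    funext j
    simp [Wop_apply]
  | one =>
    simp only [FreeAlgebra.lift_ι_apply, map_one, genMap, Sum.elim_inl]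
    apply LinearMap.ext; intro z
    funext j
    simp [Wop_apply, WittVector.one_coeff_zero]
  | add a b =>
    simp only [FreeAlgebra.lift_ι_apply, map_add, genMap, Sum.elim_inl]
    apply LinearMap.ext; intro z
    funext j
    simp [Wop_apply, WittVector.add_coeff_zero, add_mul]
  | mul a b =>
    simp only [FreeAlgebra.lift_ι_apply, map_mul, genMap, Sum.elim_inl]
    apply LinearMap.ext; intro z
    funext j
    simp [Wop_apply, WittVector.mul_coeff_zero, Module.End.mul_apply, mul_assoc]
  | FV =>
    simp only [FreeAlgebra.lift_ι_apply, map_mul, genMap, Sum.elim_inl, Sum.elim_inr,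
      Matrix.cons_val_zero, Matrix.cons_val_one, Matrix.head_cons]
    apply LinearMap.ext; intro z
    funext j
    have hp0 : ((p : WittVector p k)).coeff 0 = 0 := by
      have : ((p : WittVector p k)).coeff 0 = ((p : ℕ) : k) := by
        simpa using (WittVector.constantCoeff (p := p) (R := k)).map_natCast p
      rw [this, CharP.cast_eq_zero]
    simp only [Module.End.mul_apply, AddMonoidHom.coe_toIntLinearMap, Wop_apply, hp0, zero_mul]
    rw [Fop_apply]
    split_ifs with h1 h2
    · rw [Vop_apply]
      have : ¬ ((m + n - 1 : ℕ) + 1 ≤ m ∧ (m + n - 1 : ℕ) + 1 < m + n) := by omega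
      rw [dif_neg this, map_zero, mul_zero]
    · rw [Vop_apply]
      have : ¬ (((j : ℕ) - 1) + 1 ≤ m ∧ ((j : ℕ) - 1) + 1 < m + n) := by omega
      rw [dif_neg this, map_zero]
    · rfl
  | VF =>
    simp only [FreeAlgebra.lift_ι_apply, map_mul, genMap, Sum.elim_inl, Sum.elim_inr,
      Matrix.cons_val_zero, Matrix.cons_val_one, Matrix.head_cons]
    apply LinearMap.ext; intro z
    funext j
    have hp0 : ((p : WittVector p k)).coeff 0 = 0 := by
      have : ((p : WittVector p k)).coeff 0 = ((p : ℕ) : k) := by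
        simpa using (WittVector.constantCoeff (p := p) (R := k)).map_natCast p
      rw [this, CharP.cast_eq_zero]
    simp only [Module.End.mul_apply, AddMonoidHom.coe_toIntLinearMap, Wop_apply, hp0, zero_mul]
    rw [Vop_apply]
    split_ifs with h1
    · rw [Fop_apply]
      have h2 : ¬ ((j : ℕ) + 1 = 0) := by omega
      have h3 : ¬ (m + 1 ≤ (j : ℕ) + 1) := by omega
      rw [if_neg h2, dif_neg h3, map_zero]
    · rfl
  | Fx x =>
    simp only [FreeAlgebra.lift_ι_apply, map_mul, genMap, Sum.elim_inl, Sum.elim_inr,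
      Matrix.cons_val_zero]
    apply LinearMap.ext; intro z
    funext j
    simp only [Module.End.mul_apply, AddMonoidHom.coe_toIntLinearMap, Wop_apply,
      WittVector.coeff_frobenius_charP]
    rw [Fop_apply, Fop_apply]
    split_ifs with h1 h2
    · show ν * frobenius k p (x.coeff 0 * _) = _
      rw [map_mul]
      show ν * ((x.coeff 0) ^ p * _) = _
      ring
    · show frobenius k p (x.coeff 0 * _) = _
      rw [map_mul]
      rfl
    · rw [mul_zero]
  | xV x =>
    simp only [FreeAlgebra.lift_ι_apply, map_mul, genMap, Sum.elim_inl, Sum.elim_inr,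
      Matrix.cons_val_one, Matrix.head_cons]
    apply LinearMap.ext; intro z
    funext j
    simp only [Module.End.mul_apply, Matrix.cons_val_zero, AddMonoidHom.coe_toIntLinearMap, Wop_apply,
      WittVector.coeff_frobenius_charP]
    rw [Vop_apply, Vop_apply]
    split_ifs with h1
    · rw [Wop_apply, WittVector.coeff_frobenius_charP, map_mul]
      congr 1
      exact (frobeniusEquiv_symm_apply_frobenius k p (x.coeff 0)).symm
    · rw [mul_zero]

/-- The representation of the Dieudonné ring on `k^{m+n}`. -/
def rho : DieudonneRing p k →ₐ[ℤ] Module.End ℤ (Fin (m + n) → k) :=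
  RingQuot.liftAlgHom ℤ ⟨FreeAlgebra.lift ℤ (genMap p k m n ν), genMap_rel p k m n ν⟩

lemma rho_mk (x : FreeAlgebra ℤ (WittVector p k ⊕ Fin 2)) :
    rho p k m n ν (RingQuot.mkRingHom _ x) = FreeAlgebra.lift ℤ (genMap p k m n ν) x := by
  rw [← RingQuot.mkAlgHom_coe ℤ]
  exact RingQuot.liftAlgHom_mkAlgHom_apply _ _ _ _

lemma rho_DF : rho p k m n ν (DF p k) = (Fop p k m n ν).toIntLinearMap := by
  rw [DF, rho_mk, FreeAlgebra.lift_ι_apply]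
  rfl

lemma rho_DV : rho p k m n ν (DV p k) = (Vop p k m n).toIntLinearMap := by
  rw [DV, rho_mk, FreeAlgebra.lift_ι_apply]
  rfl

lemma rho_DW (w : WittVector p k) :
    rho p k m n ν (DW p k w) = (Wop p k m n w).toIntLinearMap := by
  rw [DW, rho_mk, FreeAlgebra.lift_ι_apply]
  rfl

end Part3
section Part4
variable (p : ℕ) [Fact p.Prime] (k : Type) [Field k] [CharP k p] [PerfectRing k p]
variable (m n : ℕ) (ν : k)

lemma Fop_single_mid {i : Fin (m + n)} (c : k) (h1 : m ≤ (i : ℕ)) (h2 : (i : ℕ) < m + n - 1) :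
    Fop p k m n ν (Pi.single i c) = Pi.single ⟨(i : ℕ) + 1, by omega⟩ (c ^ p) := by
  funext j
  rw [Fop_apply]
  simp only [Pi.single_apply, Fin.ext_iff]
  split_ifs <;> first | omega | simp [frobenius_def, (Fact.out : p.Prime).ne_zero]

lemma Fop_single_top (c : k) (hN : 0 < m + n) (hm : 0 < m) :
    Fop p k m n ν (Pi.single ⟨m + n - 1, by omega⟩ c) = Pi.single ⟨0, hN⟩ (ν * c ^ p) := by
  funext j
  rw [Fop_apply]
  simp only [Pi.single_apply, Fin.ext_iff]
  split_ifs <;> first | omega | simp [frobenius_def, (Fact.out : p.Prime).ne_zero]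

lemma Vop_single_in {i : Fin (m + n)} (c : k) (h1 : 1 ≤ (i : ℕ)) (h2 : (i : ℕ) ≤ m) :
    Vop p k m n (Pi.single i c)
      = Pi.single ⟨(i : ℕ) - 1, by have := i.isLt; omega⟩ ((frobeniusEquiv k p).symm c) := by
  funext j
  rw [Vop_apply]
  simp only [Pi.single_apply, Fin.ext_iff]
  split_ifs <;> first | omega | simp

lemma Fop_iter_single (hm : 0 < m) (hn : 0 < n) :
    ∀ j : ℕ, ∀ _hj : j ≤ n - 1, (⇑(Fop p k m n ν))^[j] (Pi.single ⟨m, by omega⟩ (1 : k))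
      = Pi.single ⟨m + j, by omega⟩ (1 : k) := by
  intro j
  induction j with
  | zero => intro _; simp
  | succ i ih =>
    intro hi
    rw [Function.iterate_succ_apply', ih (by omega),
      Fop_single_mid p k m n ν _ (by show m ≤ m + i; omega) (by show m + i < m + n - 1; omega),
      one_pow]
    all_goals (congr 1 <;> exact Fin.ext (by show m + i + 1 = m + (i + 1); omega))

lemma Fop_iter_single_n (hm : 0 < m) (hn : 0 < n) :
    (⇑(Fop p k m n ν))^[n] (Pi.single ⟨m, by omega⟩ (1 : k))
      = Pi.single ⟨0, by omega⟩ ν := by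
  obtain ⟨n', rfl⟩ : ∃ n', n = n' + 1 := ⟨n - 1, by omega⟩
  rw [Function.iterate_succ_apply', Fop_iter_single p k m (n' + 1) ν hm hn n' (by omega)]
  have : (⟨m + n', by omega⟩ : Fin (m + (n' + 1))) = ⟨m + (n' + 1) - 1, by omega⟩ := by
    apply Fin.ext
    show m + n' = m + (n' + 1) - 1
    omega
  rw [this, Fop_single_top p k m (n' + 1) ν _ (by omega) hm, one_pow, mul_one]

lemma Vop_iter_single (hm : 0 < m) (hn : 0 < n) :
    ∀ j : ℕ, ∀ _hj : j ≤ m, (⇑(Vop p k m n))^[j] (Pi.single ⟨m, by omega⟩ (1 : k))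
      = Pi.single ⟨m - j, by omega⟩ (1 : k) := by
  intro j
  induction j with
  | zero => intro _; simp
  | succ i ih =>
    intro hi
    rw [Function.iterate_succ_apply', ih (by omega),
      Vop_single_in p k m n _ (by show 1 ≤ m - i; omega) (by show m - i ≤ m; omega), map_one]
    all_goals (congr 1 <;> exact Fin.ext (by show m - i - 1 = m - (i + 1); omega))

lemma Fop_iter_zero_coeff (hm : 0 < m) (hn : 0 < n) :
    ∀ j : ℕ, ∀ _h1 : 1 ≤ j, ∀ _h2 : j ≤ n, ∀ z : Fin (m + n) → k,
      (⇑(Fop p k m n ν))^[j] z ⟨0, by omega⟩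
        = ν * (frobenius k p)^[j] (z ⟨m + n - j, by omega⟩) := by
  intro j
  induction j with
  | zero => omega
  | succ i ih =>
    intro _ hin z
    rcases Nat.eq_zero_or_pos i with hi | hi
    · subst hi
      simp only [zero_add, Function.iterate_one]
      rw [Fop_apply, if_pos (show ((⟨0, by omega⟩ : Fin (m + n)) : ℕ) = 0 from rfl)]
    · rw [Function.iterate_succ_apply, ih hi (by omega)]
      have harg : Fop p k m n ν z ⟨m + n - i, by omega⟩
          = frobenius k p (z ⟨m + n - (i + 1), by omega⟩) := by
        rw [Fop_apply]
        rw [if_neg (by show ¬ (m + n - i = 0); omega),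
          dif_pos (by show m + 1 ≤ m + n - i; omega)]
        congr 2 <;> exact Fin.ext (by show m + n - i - 1 = m + n - (i + 1); omega)
      rw [harg, ← Function.iterate_succ_apply]

lemma Vop_iter_zero_coeff (hm : 0 < m) (hn : 0 < n) :
    ∀ j : ℕ, ∀ _hj : j ≤ m, ∀ z : Fin (m + n) → k,
      (⇑(Vop p k m n))^[j] z ⟨0, by omega⟩
        = (⇑(frobeniusEquiv k p).symm)^[j] (z ⟨j, by omega⟩) := by
  intro j
  induction j with
  | zero => intro _ z; simp
  | succ i ih =>
    intro hi z
    rw [Function.iterate_succ_apply, ih (by omega)]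
    have harg : Vop p k m n z ⟨i, by omega⟩
        = (frobeniusEquiv k p).symm (z ⟨i + 1, by omega⟩) := by
      rw [Vop_apply, dif_pos ⟨by show i + 1 ≤ m; omega, by show i + 1 < m + n; omega⟩]
    rw [harg, ← Function.iterate_succ_apply]

lemma Fop_m_coeff (hm : 0 < m) (hn : 0 < n) (z : Fin (m + n) → k) :
    Fop p k m n ν z ⟨m, by omega⟩ = 0 := by
  rw [Fop_apply, if_neg (by show ¬ (m = 0); omega), dif_neg (by show ¬ (m + 1 ≤ m); omega)]

lemma Vop_m_coeff (hm : 0 < m) (hn : 0 < n) (z : Fin (m + n) → k) :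
    Vop p k m n z ⟨m, by omega⟩ = 0 := by
  rw [Vop_apply, dif_neg (by rintro ⟨h1, -⟩; revert h1; show ¬ (m + 1 ≤ m); omega)]

end Part4
section Part5
variable (p : ℕ) [Fact p.Prime] (k : Type) [Field k] [CharP k p] [PerfectRing k p]
variable (m n : ℕ) (ν : k)

/-- The action of any element of the Dieudonné ring preserves vanishing of the `m`-th
coordinate. -/
lemma rho_m_coeff_eq_zero (hm : 0 < m) (hn : 0 < n) (d : DieudonneRing p k)
    (z : Fin (m + n) → k) (hz : z ⟨m, by omega⟩ = 0) :
    rho p k m n ν d z ⟨m, by omega⟩ = 0 := by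
  obtain ⟨y, rfl⟩ := RingQuot.mkRingHom_surjective _ d
  induction y using FreeAlgebra.induction generalizing z with
  | grade0 r =>
    have : (RingQuot.mkRingHom (DieudonneRel p k)) (algebraMap ℤ _ r)
        = algebraMap ℤ (DieudonneRing p k) r := by
      rw [← RingQuot.mkAlgHom_coe ℤ, RingQuot.mkAlgHom]
      simp
    rw [this, AlgHom.commutes]
    simp [Module.algebraMap_end_apply, hz]
  | grade1 x =>
    rcases x with w | i
    · rw [show (RingQuot.mkRingHom (DieudonneRel p k)) (FreeAlgebra.ι ℤ (Sum.inl w))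
          = DW p k w from rfl, rho_DW]
      simp [Wop_apply, hz]
    · have hF : rho p k m n ν (DF p k) z ⟨m, by omega⟩ = 0 := by
        rw [rho_DF]; exact Fop_m_coeff p k m n ν hm hn z
      have hV : rho p k m n ν (DV p k) z ⟨m, by omega⟩ = 0 := by
        rw [rho_DV]; exact Vop_m_coeff p k m n hm hn z
      fin_cases i
      · exact hF
      · exact hV
  | mul a b iha ihb =>
    rw [map_mul, map_mul, Module.End.mul_apply]
    exact iha _ (ihb z hz)
  | add a b iha ihb =>
    rw [map_add, map_add, LinearMap.add_apply, Pi.add_apply, iha z hz, ihb z hz, add_zero]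

/-- The representation kills the left ideal `Mmn`. -/
lemma rho_vanish (hm : 0 < m) (hn : 0 < n) {d : DieudonneRing p k}
    (hd : d ∈ Mmn p k m n ν) :
    rho p k m n ν d (Pi.single ⟨m, by omega⟩ (1 : k)) = 0 := by
  induction hd using Submodule.span_induction with
  | mem x hx =>
    rcases hx with hx | hx
    · subst hx
      rw [map_sub, map_pow, map_mul, map_pow, rho_DF, rho_DV, rho_DW, LinearMap.sub_apply,
        Module.End.pow_apply, Module.End.mul_apply, Module.End.pow_apply]
      simp only [AddMonoidHom.coe_toIntLinearMap]
      rw [Fop_iter_single_n p k m n ν hm hn, Vop_iter_single p k m n hm hn m le_rfl]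
      have h0 : (⟨m - m, by omega⟩ : Fin (m + n)) = ⟨0, by omega⟩ := by
        exact Fin.ext (by show m - m = 0; omega)
      rw [h0]
      have : Wop p k m n (WittVector.teichmuller p ν) (Pi.single ⟨0, by omega⟩ (1 : k))
          = Pi.single ⟨0, by omega⟩ ν := by
        funext j
        rw [Wop_apply, WittVector.teichmuller_coeff_zero]
        simp only [Pi.single_apply]
        split_ifs <;> simp
      rw [this, sub_self]
    · simp only [Set.mem_singleton_iff] at hx
      subst hx
      rw [map_natCast]
      have : ((p : ℕ) : Module.End ℤ (Fin (m + n) → k)) (Pi.single ⟨m, by omega⟩ (1 : k))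
          = (p : ℕ) • (Pi.single ⟨m, by omega⟩ (1 : k)) := by
        rw [Module.End.natCast_apply]
      rw [this]
      funext j
      simp [CharP.cast_eq_zero k p, nsmul_eq_mul]
  | zero => simp
  | add x y _ _ ihx ihy => rw [map_add, LinearMap.add_apply, ihx, ihy, add_zero]
  | smul r x _ ihx => rw [smul_eq_mul, map_mul, Module.End.mul_apply, ihx, map_zero]

end Part5

/-- Part of Theorem A.3 (Koch's classification): for `m, n ≥ 1` and
`μ, μ' ∈ k^×`, the left Dieudonné modules `M_{m,n,μ} = D/D(Fⁿ − μVᵐ, p)` and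
`M_{m,n,μ'}` are isomorphic if and only if `μ/μ' = a^{p^{m+n} − 1}` for some
`a ∈ k^×`. -/
theorem dieudonne_module_iso_iff (m n : ℕ) (hm : 1 ≤ m) (hn : 1 ≤ n)
    (μ μ' : k) (hμ : μ ≠ 0) (hμ' : μ' ≠ 0) :
    Nonempty ((DieudonneRing p k ⧸ Mmn p k m n μ) ≃ₗ[DieudonneRing p k]
        (DieudonneRing p k ⧸ Mmn p k m n μ')) ↔
      ∃ a : k, a ≠ 0 ∧ μ = μ' * a ^ (p ^ (m + n) - 1) := by
  constructor
  · rintro ⟨φ⟩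
    obtain ⟨x, hx⟩ := Submodule.Quotient.mk_surjective (Mmn p k m n μ')
      (φ (Submodule.Quotient.mk 1))
    set em : Fin (m + n) → k := Pi.single ⟨m, by omega⟩ (1 : k) with hem
    set r : DieudonneRing p k :=
      DF p k ^ n - DW p k (WittVector.teichmuller p μ) * DV p k ^ m with hr
    have hrx : r * x ∈ Mmn p k m n μ' := by
      rw [← Submodule.Quotient.mk_eq_zero]
      have h1 : (Submodule.Quotient.mk (r * x) : _ ⧸ Mmn p k m n μ')
          = r • Submodule.Quotient.mk x := by
        rw [← Submodule.Quotient.mk_smul]; rfl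
      have h2 : r • (Submodule.Quotient.mk (1 : DieudonneRing p k) : _ ⧸ Mmn p k m n μ)
          = Submodule.Quotient.mk r := by
        rw [← Submodule.Quotient.mk_smul, smul_eq_mul, mul_one]
      rw [h1, hx, ← map_smul, h2, (Submodule.Quotient.mk_eq_zero _).mpr (gen1_mem p k m n μ)]
      exact map_zero φ.toLinearMap
    obtain ⟨d, hd⟩ := Submodule.Quotient.mk_surjective (Mmn p k m n μ)
      (φ.symm (Submodule.Quotient.mk 1))
    have hdx : d * x - 1 ∈ Mmn p k m n μ' := by
      rw [← Submodule.Quotient.mk_eq_zero]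
      have h3 : (Submodule.Quotient.mk (d * x - 1) : _ ⧸ Mmn p k m n μ')
          = Submodule.Quotient.mk (d * x) - Submodule.Quotient.mk 1 :=
        Submodule.Quotient.mk_sub _
      have h4 : (Submodule.Quotient.mk (d * x) : _ ⧸ Mmn p k m n μ')
          = d • Submodule.Quotient.mk x := by
        rw [← Submodule.Quotient.mk_smul]; rfl
      have h5 : (Submodule.Quotient.mk (d * 1) : _ ⧸ Mmn p k m n μ)
          = d • Submodule.Quotient.mk 1 := by
        rw [← Submodule.Quotient.mk_smul]; rfl
      rw [h3, h4, hx, ← map_smul]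
      rw [show d • (Submodule.Quotient.mk (1 : DieudonneRing p k) : _ ⧸ Mmn p k m n μ)
          = Submodule.Quotient.mk d by rw [← Submodule.Quotient.mk_smul, smul_eq_mul, mul_one],
        hd, LinearEquiv.apply_symm_apply, sub_self]
    set ξ : Fin (m + n) → k := rho p k m n μ' x em with hξdef
    have hξm : ξ ⟨m, by omega⟩ ≠ 0 := by
      intro h0
      have h1 : rho p k m n μ' (d * x - 1) em = 0 :=
        rho_vanish p k m n μ' (by omega) (by omega) hdx
      rw [map_sub, map_mul, LinearMap.sub_apply, Module.End.mul_apply, map_one,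
        sub_eq_zero] at h1
      have h3 := rho_m_coeff_eq_zero p k m n μ' (by omega) (by omega) d ξ h0
      rw [← hξdef] at h1
      rw [h1] at h3
      rw [hem] at h3
      simp [Pi.single_apply] at h3
    have hrel0 : rho p k m n μ' (r * x) em = 0 := rho_vanish p k m n μ' hm hn hrx
    rw [map_mul, Module.End.mul_apply, ← hξdef, hr, map_sub, map_pow, map_mul, map_pow,
      rho_DF, rho_DV, rho_DW, LinearMap.sub_apply, Module.End.pow_apply, Module.End.mul_apply,
      Module.End.pow_apply] at hrel0
    have heq0 := congrFun hrel0 ⟨0, by omega⟩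
    simp only [AddMonoidHom.coe_toIntLinearMap, Pi.sub_apply, Pi.zero_apply,
      sub_eq_zero] at heq0
    rw [Fop_iter_zero_coeff p k m n μ' hm hn n hn le_rfl ξ] at heq0
    rw [Wop_apply, WittVector.teichmuller_coeff_zero] at heq0
    rw [Vop_iter_zero_coeff p k m n hm hn m le_rfl ξ] at heq0
    have hidx : (⟨m + n - n, by omega⟩ : Fin (m + n)) = ⟨m, by omega⟩ :=
      Fin.ext (by show m + n - n = m; omega)
    rw [hidx] at heq0
    set b : k := ξ ⟨m, by omega⟩ with hbdef
    set a : k := (⇑(frobeniusEquiv k p).symm)^[m] b with hadef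
    have hab : (frobenius k p)^[m] a = b :=
      (Function.LeftInverse.iterate (frobenius_apply_frobeniusEquiv_symm k p) m) b
    have ha : a ≠ 0 := by
      intro h
      rw [h] at hab
      rw [iterate_frobenius, zero_pow (pow_ne_zero m (Fact.out : p.Prime).ne_zero)] at hab
      exact hξm hab.symm
    have key : μ' * a ^ p ^ (m + n) = μ * a := by
      have h6 : (frobenius k p)^[n] b = a ^ p ^ (m + n) := by
        rw [← hab, ← Function.iterate_add_apply, Nat.add_comm n m, iterate_frobenius]
      rw [← h6]
      exact heq0
    refine ⟨a, ha, ?_⟩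
    have h7 : (1 : ℕ) ≤ p ^ (m + n) := Nat.one_le_pow _ _ (Fact.out : p.Prime).pos
    have h8 : μ' * a ^ (p ^ (m + n) - 1) * a = μ * a := by
      rw [mul_assoc, ← pow_succ, Nat.sub_add_cancel h7]
      exact key
    exact (mul_right_cancel₀ ha h8).symm
  · rintro ⟨a, ha, h⟩
    exact iso_of_rel p k m n μ μ' a ha h

end
end
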